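/- Let S be an η-sparse family of dyadic cubes in ℝⁿ, w a weight, R a dyadic cube, and 0 < s < 1. Then ∑_{Q ∈ S, Q ⊆ R} (w_Q)^s |Q| ≤ C (w_R)^s |R|, where C depends only on η, s, and n. -/

import Mathlib

open MeasureTheory Set
open scoped ENNReal

noncomputable section

def dyadicCube (n : ℕ) (k : ℤ) (m : Fin n → ℤ) : Set (Fin n → ℝ) :=
  {x | ∀ i, (m i : ℝ) * (2:ℝ) ^ k ≤ x i ∧ x i < ((m i : ℝ) + 1) * (2:ℝ) ^ k}

def IsDyadicCube {n : ℕ} (Q : Set (Fin n → ℝ)) : Prop := ∃ k m, Q = dyadicCube n k m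

def IsCube {n : ℕ} (Q : Set (Fin n → ℝ)) : Prop :=
  ∃ (a : Fin n → ℝ) (h : ℝ), 0 < h ∧ Q = {x | ∀ i, a i ≤ x i ∧ x i < a i + h}

def IsSparse {n : ℕ} (η : ℝ≥0∞) (S : Set (Set (Fin n → ℝ))) : Prop :=
  (∀ Q ∈ S, IsDyadicCube Q) ∧
  ∃ E : Set (Fin n → ℝ) → Set (Fin n → ℝ),
    (∀ Q ∈ S, E Q ⊆ Q ∧ MeasurableSet (E Q) ∧ η * volume Q ≤ volume (E Q)) ∧
    S.PairwiseDisjoint E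

def mass {n : ℕ} (w : (Fin n → ℝ) → ℝ≥0∞) (Q : Set (Fin n → ℝ)) : ℝ≥0∞ := ∫⁻ x in Q, w x

def avg {n : ℕ} (w : (Fin n → ℝ) → ℝ≥0∞) (Q : Set (Fin n → ℝ)) : ℝ≥0∞ := mass w Q / volume Q

def maximalOp {n : ℕ} (f : (Fin n → ℝ) → ℝ≥0∞) (x : Fin n → ℝ) : ℝ≥0∞ :=
  ⨆ (Q : Set (Fin n → ℝ)) (_ : IsCube Q) (_ : x ∈ Q), avg f Q

/-!
Cubes of `S` inside `R` whose average exceeds `t` lie in the maximal dyadic subcubes of `R` with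
average above `t`. These are disjoint, so their total volume is at most `w(R) / t`, and sparseness
bounds the total volume of the cubes of `S` they contain by `η⁻¹ w(R) / t`. Sorting the cubes of
`S` by the dyadic range `2 ^ j w_R < w_Q ≤ 2 ^ (j + 1) w_R` of their averages, layer `j`
contributes at most `η⁻¹ 2 ^ s 2 ^ (j (s - 1)) w_R ^ s |R|`, a geometric series because `s < 1`.
-/

section DyadicCubes

variable {n : ℕ}

lemma dyadicCube_eq_pi (n : ℕ) (k : ℤ) (m : Fin n → ℤ) : dyadicCube n k m =
    Set.pi univ fun i => Ico ((m i : ℝ) * 2 ^ k) ((m i + 1) * 2 ^ k) := by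
  ext x; simp [dyadicCube]

lemma measurableSet_dyadicCube (n : ℕ) (k : ℤ) (m : Fin n → ℤ) :
    MeasurableSet (dyadicCube n k m) := by
  rw [dyadicCube_eq_pi]; exact .univ_pi fun _ => measurableSet_Ico

lemma volume_dyadicCube (n : ℕ) (k : ℤ) (m : Fin n → ℤ) :
    volume (dyadicCube n k m) = ENNReal.ofReal (2 ^ k) ^ n := by
  simp [dyadicCube_eq_pi, volume_pi_pi, Real.volume_Ico, add_mul]

lemma volume_dyadicCube_pos (n : ℕ) (k : ℤ) (m : Fin n → ℤ) :
    0 < volume (dyadicCube n k m) := by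
  rw [volume_dyadicCube]; positivity

lemma volume_dyadicCube_ne_top (n : ℕ) (k : ℤ) (m : Fin n → ℤ) :
    volume (dyadicCube n k m) ≠ ∞ := by
  rw [volume_dyadicCube]; exact ENNReal.pow_ne_top ENNReal.ofReal_ne_top

lemma dyadicCube_zero (k : ℤ) (m : Fin 0 → ℤ) : dyadicCube 0 k m = univ := by
  simp [dyadicCube]

lemma mem_dyadicCube_iff {k : ℤ} {m : Fin n → ℤ} {x : Fin n → ℝ} :
    x ∈ dyadicCube n k m ↔ ∀ i, ⌊x i / 2 ^ k⌋ = m i := by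
  have h2k : (0 : ℝ) < 2 ^ k := by positivity
  simp only [dyadicCube, Set.mem_ofPred_eq, Int.floor_eq_iff, le_div_iff₀ h2k, div_lt_iff₀ h2k]

lemma corner_mem_dyadicCube (k : ℤ) (m : Fin n → ℤ) :
    (fun i => (m i : ℝ) * 2 ^ k) ∈ dyadicCube n k m := by
  simp [mem_dyadicCube_iff, zpow_ne_zero]

def dyadicCubeAt (n : ℕ) (k : ℤ) (x : Fin n → ℝ) : Set (Fin n → ℝ) :=
  dyadicCube n k fun i => ⌊x i / 2 ^ k⌋

lemma mem_dyadicCubeAt_iff {k : ℤ} {x y : Fin n → ℝ} :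
    y ∈ dyadicCubeAt n k x ↔ ∀ i, ⌊y i / 2 ^ k⌋ = ⌊x i / 2 ^ k⌋ :=
  mem_dyadicCube_iff

lemma self_mem_dyadicCubeAt (k : ℤ) (x : Fin n → ℝ) : x ∈ dyadicCubeAt n k x :=
  mem_dyadicCubeAt_iff.2 fun _ => rfl

lemma dyadicCube_eq_dyadicCubeAt {k : ℤ} {m : Fin n → ℤ} {x : Fin n → ℝ}
    (hx : x ∈ dyadicCube n k m) : dyadicCube n k m = dyadicCubeAt n k x := by
  rw [dyadicCubeAt, funext fun i => mem_dyadicCube_iff.1 hx i]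

lemma dyadicCubeAt_eq_of_mem {k : ℤ} {x y : Fin n → ℝ} (hy : y ∈ dyadicCubeAt n k x) :
    dyadicCubeAt n k y = dyadicCubeAt n k x :=
  (dyadicCube_eq_dyadicCubeAt hy).symm

lemma floor_div_two_zpow_add (a : ℝ) (k : ℤ) (d : ℕ) :
    ⌊a / 2 ^ (k + d)⌋ = ⌊a / 2 ^ k⌋ / (2 ^ d : ℕ) := by
  rw [← Int.floor_div_natCast, zpow_add₀ two_ne_zero, div_mul_eq_div_div]
  norm_cast

lemma dyadicCubeAt_mono {k k' : ℤ} (h : k ≤ k') (x : Fin n → ℝ) :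
    dyadicCubeAt n k x ⊆ dyadicCubeAt n k' x := by
  obtain ⟨d, rfl⟩ := Int.exists_add_of_le h
  intro y hy
  simp only [mem_dyadicCubeAt_iff, floor_div_two_zpow_add] at hy ⊢
  exact fun i => by rw [hy i]

lemma scale_le_of_dyadicCube_subset (hn : n ≠ 0) {k k' : ℤ} {m m' : Fin n → ℤ}
    (h : dyadicCube n k m ⊆ dyadicCube n k' m') : k ≤ k' := by
  have hvol := measure_mono (μ := volume) h
  rw [volume_dyadicCube, volume_dyadicCube, ENNReal.pow_le_pow_left_iff hn,
    ENNReal.ofReal_le_ofReal_iff (by positivity)] at hvol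
  exact (zpow_le_zpow_iff_right₀ one_lt_two).1 hvol

lemma countable_setOf_isDyadicCube (n : ℕ) :
    {Q : Set (Fin n → ℝ) | IsDyadicCube Q}.Countable :=
  (countable_range fun p : ℤ × (Fin n → ℤ) => dyadicCube n p.1 p.2).mono <| by
    rintro _ ⟨k, m, rfl⟩
    exact ⟨(k, m), rfl⟩

lemma exists_eq_dyadicCubeAt_of_subset {Q : Set (Fin n → ℝ)} (hQ : IsDyadicCube Q) {k₀ : ℤ}
    {m₀ : Fin n → ℤ} (hQR : Q ⊆ dyadicCube n k₀ m₀) :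
    ∃ l ≤ k₀, ∃ x ∈ dyadicCube n k₀ m₀, Q = dyadicCubeAt n l x := by
  obtain ⟨j, m, rfl⟩ := hQ
  have hx := corner_mem_dyadicCube j m
  -- In dimension `0` every dyadic cube is `univ`, so the scale `j` of `Q` may exceed `k₀`.
  obtain rfl | hn := eq_or_ne n 0
  · exact ⟨k₀, le_rfl, _, hQR hx, by simp only [dyadicCubeAt, dyadicCube_zero]⟩
  · exact ⟨j, scale_le_of_dyadicCube_subset hn hQR, _, hQR hx, dyadicCube_eq_dyadicCubeAt hx⟩

lemma dyadicCubeAt_eq_of_not_disjoint {l l' : ℤ} (hl : l ≤ l') {x x' : Fin n → ℝ}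
    (h : ¬Disjoint (dyadicCubeAt n l x) (dyadicCubeAt n l' x')) :
    dyadicCubeAt n l' x = dyadicCubeAt n l' x' := by
  obtain ⟨z, hzx, hzx'⟩ := not_disjoint_iff.1 h
  have hxz : x ∈ dyadicCubeAt n l' z :=
    dyadicCubeAt_mono hl z (dyadicCubeAt_eq_of_mem hzx ▸ self_mem_dyadicCubeAt l x)
  rw [← dyadicCubeAt_eq_of_mem hzx', dyadicCubeAt_eq_of_mem hxz]

lemma avg_mul_volume_dyadicCube (w : (Fin n → ℝ) → ℝ≥0∞) (k : ℤ) (m : Fin n → ℤ) :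
    avg w (dyadicCube n k m) * volume (dyadicCube n k m) = mass w (dyadicCube n k m) :=
  ENNReal.div_mul_cancel (volume_dyadicCube_pos n k m).ne' (volume_dyadicCube_ne_top n k m)

lemma avg_eq_zero_of_subset {w : (Fin n → ℝ) → ℝ≥0∞} {k : ℤ} {m : Fin n → ℤ}
    (h : avg w (dyadicCube n k m) = 0) {Q : Set (Fin n → ℝ)} (hQ : Q ⊆ dyadicCube n k m) :
    avg w Q = 0 := by
  have hmass : mass w (dyadicCube n k m) = 0 := by
    rw [← avg_mul_volume_dyadicCube, h, zero_mul]
  have hmassQ : mass w Q = 0 := nonpos_iff_eq_zero.1 (hmass ▸ lintegral_mono_set hQ)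
  rw [avg, hmassQ, ENNReal.zero_div]

end DyadicCubes

section StoppingCubes

variable {n : ℕ} (w : (Fin n → ℝ) → ℝ≥0∞) (t : ℝ≥0∞) (k₀ : ℤ) (m₀ : Fin n → ℤ)

/-- The maximal dyadic subcubes of `dyadicCube n k₀ m₀` on which `w` has average above `t`. -/
def stoppingCubes : Set (Set (Fin n → ℝ)) :=
  {P | ∃ l ≤ k₀, ∃ x ∈ dyadicCube n k₀ m₀, P = dyadicCubeAt n l x ∧ t < avg w P ∧
    ∀ l', l < l' → l' ≤ k₀ → avg w (dyadicCubeAt n l' x) ≤ t}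

variable {w t k₀ m₀}

lemma isDyadicCube_of_mem_stoppingCubes {P : Set (Fin n → ℝ)} (hP : P ∈ stoppingCubes w t k₀ m₀) :
    IsDyadicCube P := by
  obtain ⟨l, -, x, -, rfl, -⟩ := hP
  exact ⟨l, _, rfl⟩

lemma subset_of_mem_stoppingCubes {P : Set (Fin n → ℝ)} (hP : P ∈ stoppingCubes w t k₀ m₀) :
    P ⊆ dyadicCube n k₀ m₀ := by
  obtain ⟨l, hl, x, hx, rfl, -⟩ := hP
  rw [dyadicCube_eq_dyadicCubeAt hx]
  exact dyadicCubeAt_mono hl x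

lemma lt_avg_of_mem_stoppingCubes {P : Set (Fin n → ℝ)} (hP : P ∈ stoppingCubes w t k₀ m₀) :
    t < avg w P := by
  obtain ⟨-, -, -, -, -, hlt, -⟩ := hP
  exact hlt

lemma pairwiseDisjoint_stoppingCubes : (stoppingCubes w t k₀ m₀).PairwiseDisjoint id := by
  have key : ∀ {l l' : ℤ} {x x' : Fin n → ℝ}, l ≤ l' → l' ≤ k₀ →
      (∀ l'', l < l'' → l'' ≤ k₀ → avg w (dyadicCubeAt n l'' x) ≤ t) →
      t < avg w (dyadicCubeAt n l' x') →
      ¬Disjoint (dyadicCubeAt n l x) (dyadicCubeAt n l' x') →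
      dyadicCubeAt n l x = dyadicCubeAt n l' x' := by
    intro l l' x x' hll' hl' hmax hlt h
    have heq := dyadicCubeAt_eq_of_not_disjoint hll' h
    obtain rfl | hll' := hll'.eq_or_lt
    · exact heq
    · exact absurd (heq ▸ hmax l' hll' hl') hlt.not_ge
  rintro _ ⟨l, hl, x, -, rfl, hlt, hmax⟩ _ ⟨l', hl', x', -, rfl, hlt', hmax'⟩ hne
  by_contra h
  rcases le_total l l' with hll' | hll'
  · exact hne (key hll' hl' hmax hlt' h)
  · exact hne (key hll' hl hmax' hlt fun hd => h hd.symm).symm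

lemma exists_mem_stoppingCubes_superset {Q : Set (Fin n → ℝ)} (hQ : IsDyadicCube Q)
    (hQR : Q ⊆ dyadicCube n k₀ m₀) (hQt : t < avg w Q) :
    ∃ P ∈ stoppingCubes w t k₀ m₀, Q ⊆ P := by
  obtain ⟨j, hj, x, hx, rfl⟩ := exists_eq_dyadicCubeAt_of_subset hQ hQR
  obtain ⟨l, ⟨hjl, hl, hlt⟩, hmax⟩ := Int.exists_greatest_of_bdd
    ⟨k₀, fun l (hl : j ≤ l ∧ l ≤ k₀ ∧ t < avg w (dyadicCubeAt n l x)) => hl.2.1⟩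
    ⟨j, le_rfl, hj, hQt⟩
  refine ⟨_, ⟨l, hl, x, hx, rfl, hlt, fun l' hll' hl' => ?_⟩, dyadicCubeAt_mono hjl x⟩
  by_contra! h
  exact (hmax l' ⟨hjl.trans hll'.le, hl', h⟩).not_gt hll'

lemma mul_volume_sUnion_stoppingCubes_le :
    t * volume (⋃₀ stoppingCubes w t k₀ m₀) ≤ mass w (dyadicCube n k₀ m₀) := by
  have hcount : (stoppingCubes w t k₀ m₀).Countable :=
    (countable_setOf_isDyadicCube n).mono fun _ => isDyadicCube_of_mem_stoppingCubes
  have hmeas : ∀ P ∈ stoppingCubes w t k₀ m₀, MeasurableSet P := fun P hP => by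
    obtain ⟨k, m, rfl⟩ := isDyadicCube_of_mem_stoppingCubes hP
    exact measurableSet_dyadicCube n k m
  have hmass : ∀ P ∈ stoppingCubes w t k₀ m₀, t * volume P ≤ mass w P := fun P hP => by
    have hlt := lt_avg_of_mem_stoppingCubes hP
    obtain ⟨k, m, rfl⟩ := isDyadicCube_of_mem_stoppingCubes hP
    rw [← avg_mul_volume_dyadicCube]
    exact mul_le_mul_left hlt.le _
  calc t * volume (⋃₀ stoppingCubes w t k₀ m₀)
      = ∑' P : stoppingCubes w t k₀ m₀, t * volume (P : Set (Fin n → ℝ)) := by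
        rw [measure_sUnion hcount pairwiseDisjoint_stoppingCubes hmeas, ENNReal.tsum_mul_left]
    _ ≤ ∑' P : stoppingCubes w t k₀ m₀, mass w P :=
        ENNReal.tsum_le_tsum fun P => hmass P P.2
    _ = mass w (⋃₀ stoppingCubes w t k₀ m₀) := by
        rw [mass, sUnion_eq_biUnion, lintegral_biUnion hcount hmeas pairwiseDisjoint_stoppingCubes]
        rfl
    _ ≤ mass w (dyadicCube n k₀ m₀) :=
        lintegral_mono_set (sUnion_subset fun _ => subset_of_mem_stoppingCubes)

end StoppingCubes

lemma tsum_measure_le_of_sparse {α : Type*} [MeasurableSpace α] {μ : Measure α} {η : ℝ≥0∞}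
    (hη0 : η ≠ 0) (hη : η ≠ ∞) {S : Set (Set α)} {E : Set α → Set α}
    (hE : ∀ Q ∈ S, E Q ⊆ Q ∧ MeasurableSet (E Q) ∧ η * μ Q ≤ μ (E Q))
    (hEd : S.PairwiseDisjoint E) {T : Set (Set α)} (hTS : T ⊆ S) (hT : T.Countable) :
    ∑' Q : T, μ Q ≤ η⁻¹ * μ (⋃₀ T) := by
  calc ∑' Q : T, μ Q
      ≤ ∑' Q : T, η⁻¹ * μ (E Q) := ENNReal.tsum_le_tsum fun Q =>
        (ENNReal.mul_le_iff_le_inv hη0 hη).1 (hE Q (hTS Q.2)).2.2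
    _ = η⁻¹ * μ (⋃ Q ∈ T, E Q) := by
        rw [ENNReal.tsum_mul_left,
          measure_biUnion hT (hEd.subset hTS) fun Q hQ => (hE Q (hTS hQ)).2.1]
    _ ≤ η⁻¹ * μ (⋃₀ T) := by
        gcongr
        exact iUnion₂_subset fun Q hQ => (hE Q (hTS hQ)).1.trans (subset_sUnion_of_mem hQ)

lemma tsum_ite_eq_tsum_subtype {β : Type*} (q p : β → Prop) [DecidablePred p] (f : β → ℝ≥0∞) :
    ∑' x : {x // q x}, (if p x then f x else 0) = ∑' x : {x // q x ∧ p x}, f x := by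
  refine (tsum_subtype {x | q x} fun x => if p x then f x else 0).trans
    (.trans ?_ (tsum_subtype {x | q x ∧ p x} f).symm)
  congr 1 with x
  by_cases hq : q x <;> by_cases hp : p x <;> simp [hq, hp]

lemma mul_tsum_volume_lt_avg_le {n : ℕ} {η : ℝ≥0∞} (hη0 : η ≠ 0) (hη : η ≠ ∞)
    {S : Set (Set (Fin n → ℝ))} (hS : IsSparse η S) (w : (Fin n → ℝ) → ℝ≥0∞) (t : ℝ≥0∞)
    (k₀ : ℤ) (m₀ : Fin n → ℤ) :
    t * ∑' Q : {Q : Set (Fin n → ℝ) // Q ∈ S ∧ Q ⊆ dyadicCube n k₀ m₀},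
        (if t < avg w Q.1 then volume Q.1 else 0) ≤ η⁻¹ * mass w (dyadicCube n k₀ m₀) := by
  obtain ⟨hSd, E, hE, hEd⟩ := hS
  set T := {Q | (Q ∈ S ∧ Q ⊆ dyadicCube n k₀ m₀) ∧ t < avg w Q}
  have hTS : T ⊆ S := fun Q hQ => hQ.1.1
  have hTstop : ⋃₀ T ⊆ ⋃₀ stoppingCubes w t k₀ m₀ := sUnion_subset fun Q ⟨⟨hQS, hQR⟩, hQt⟩ =>
    let ⟨P, hP, hQP⟩ := exists_mem_stoppingCubes_superset (hSd Q hQS) hQR hQt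
    hQP.trans (subset_sUnion_of_mem hP)
  calc t * ∑' Q : {Q : Set (Fin n → ℝ) // Q ∈ S ∧ Q ⊆ dyadicCube n k₀ m₀},
        (if t < avg w Q.1 then volume Q.1 else 0)
      = t * ∑' Q : T, volume Q.1 := by
        rw [tsum_ite_eq_tsum_subtype (fun Q => Q ∈ S ∧ Q ⊆ dyadicCube n k₀ m₀) (t < avg w ·)]
        rfl
    _ ≤ t * (η⁻¹ * volume (⋃₀ T)) := by
        gcongr
        exact tsum_measure_le_of_sparse hη0 hη hE hEd hTS
          ((countable_setOf_isDyadicCube n).mono fun Q hQ => hSd Q (hTS hQ))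
    _ ≤ η⁻¹ * (t * volume (⋃₀ stoppingCubes w t k₀ m₀)) := by
        rw [mul_left_comm]
        gcongr
    _ ≤ η⁻¹ * mass w (dyadicCube n k₀ m₀) := by
        gcongr
        exact mul_volume_sUnion_stoppingCubes_le

lemma rpow_le_add_tsum_ite {a A : ℝ≥0∞} (hA0 : A ≠ 0) (hA : A ≠ ∞) {s : ℝ} (hs : 0 ≤ s) :
    a ^ s ≤ A ^ s + ∑' j : ℕ, if 2 ^ j * A < a then (2 ^ (j + 1) * A) ^ s else 0 := by
  rcases le_or_gt a A with haA | hAa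
  · exact (ENNReal.rpow_le_rpow haA hs).trans le_self_add
  obtain rfl | ha := eq_or_ne a ∞
  · have hterm : ∀ j : ℕ, A ^ s ≤ if 2 ^ j * A < ∞ then (2 ^ (j + 1) * A) ^ s else 0 := by
      intro j
      rw [if_pos (ENNReal.mul_lt_top (ENNReal.pow_lt_top ENNReal.ofNat_lt_top) hA.lt_top)]
      exact ENNReal.rpow_le_rpow (le_mul_of_one_le_left' (one_le_pow₀ one_le_two)) hs
    have hA0s : A ^ s ≠ 0 := by simp [ENNReal.rpow_eq_zero_iff, hA0, hA]
    have htop := top_unique <|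
      (ENNReal.tsum_const_eq_top_of_ne_zero hA0s).symm.le.trans (ENNReal.tsum_le_tsum hterm)
    rw [htop, add_top]
    exact le_top
  have hex : ∃ j : ℕ, a ≤ 2 ^ (j + 1) * A := by
    obtain ⟨N, hN⟩ := ENNReal.exists_nat_mul_gt hA0 ha
    refine ⟨N, hN.le.trans (mul_le_mul_left ?_ _)⟩
    exact_mod_cast (N.lt_two_pow_self.trans (Nat.pow_lt_pow_right one_lt_two N.lt_succ_self)).le
  have hJ : 2 ^ Nat.find hex * A < a := by
    rcases hJ : Nat.find hex with _ | j
    · simpa using hAa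
    · exact not_le.1 (Nat.find_min hex (hJ ▸ j.lt_succ_self))
  calc a ^ s ≤ (2 ^ (Nat.find hex + 1) * A) ^ s := ENNReal.rpow_le_rpow (Nat.find_spec hex) hs
    _ = if 2 ^ Nat.find hex * A < a then (2 ^ (Nat.find hex + 1) * A) ^ s else 0 := (if_pos hJ).symm
    _ ≤ _ := (ENNReal.le_tsum (Nat.find hex)).trans le_add_self

lemma tsum_rpow_two_pow_mul_inv_mul {A : ℝ≥0∞} (hA0 : A ≠ 0) (hA : A ≠ ∞) {s : ℝ} (hs : 0 ≤ s) :
    ∑' j : ℕ, (2 ^ (j + 1) * A) ^ s * ((2 ^ j * A)⁻¹ * A) =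
      2 ^ s * (1 - 2 ^ (s - 1))⁻¹ * A ^ s := by
  have hterm : ∀ j : ℕ, (2 ^ (j + 1) * A) ^ s * ((2 ^ j * A)⁻¹ * A) =
      2 ^ s * A ^ s * (2 ^ (s - 1)) ^ j := by
    intro j
    rw [ENNReal.mul_inv (by simp) (by simp), mul_assoc _ A⁻¹, ENNReal.inv_mul_cancel hA0 hA,
      mul_one, ENNReal.mul_rpow_of_nonneg _ _ hs, ← ENNReal.rpow_natCast, ← ENNReal.rpow_mul,
      ← ENNReal.rpow_natCast, ← ENNReal.rpow_neg, ← ENNReal.rpow_mul_natCast, mul_right_comm,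
      ← ENNReal.rpow_add _ _ two_ne_zero ENNReal.ofNat_ne_top,
      mul_right_comm (2 ^ s), ← ENNReal.rpow_add _ _ two_ne_zero ENNReal.ofNat_ne_top]
    congr 2
    push_cast
    ring
  rw [tsum_congr hterm, ENNReal.tsum_mul_left, ENNReal.tsum_geometric]
  ring

lemma tsum_rpow_avg_mul_volume_le {n : ℕ} {η : ℝ≥0∞} (hη0 : η ≠ 0) (hη : η ≠ ∞)
    {S : Set (Set (Fin n → ℝ))} (hS : IsSparse η S) (w : (Fin n → ℝ) → ℝ≥0∞) (k₀ : ℤ)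
    (m₀ : Fin n → ℤ) (hA0 : avg w (dyadicCube n k₀ m₀) ≠ 0) (hA : avg w (dyadicCube n k₀ m₀) ≠ ∞)
    {s : ℝ} (hs : 0 ≤ s) :
    ∑' Q : {Q : Set (Fin n → ℝ) // Q ∈ S ∧ Q ⊆ dyadicCube n k₀ m₀}, avg w Q.1 ^ s * volume Q.1 ≤
      η⁻¹ * (1 + 2 ^ s * (1 - 2 ^ (s - 1))⁻¹) *
        (avg w (dyadicCube n k₀ m₀) ^ s * volume (dyadicCube n k₀ m₀)) := by
  set R := dyadicCube n k₀ m₀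
  set A := avg w R
  have hvolume : ∑' Q : {Q // Q ∈ S ∧ Q ⊆ R}, volume Q.1 ≤ η⁻¹ * volume R := by
    obtain ⟨hSd, E, hE, hEd⟩ := hS
    refine (tsum_measure_le_of_sparse hη0 hη hE hEd (T := {Q | Q ∈ S ∧ Q ⊆ R}) (fun Q hQ => hQ.1)
      ((countable_setOf_isDyadicCube n).mono fun Q hQ => hSd Q hQ.1)).trans ?_
    gcongr
    exact sUnion_subset fun Q hQ => hQ.2
  have hlevel : ∀ j : ℕ, ∑' Q : {Q // Q ∈ S ∧ Q ⊆ R},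
      (if 2 ^ j * A < avg w Q.1 then volume Q.1 else 0) ≤ (2 ^ j * A)⁻¹ * A * (η⁻¹ * volume R) := by
    intro j
    have h := (ENNReal.mul_le_iff_le_inv (by simp [hA0]) (ENNReal.mul_ne_top (by simp) hA)).1
      (mul_tsum_volume_lt_avg_le hη0 hη hS w (2 ^ j * A) k₀ m₀)
    rw [← avg_mul_volume_dyadicCube] at h
    exact h.trans_eq (by ring)
  calc ∑' Q : {Q // Q ∈ S ∧ Q ⊆ R}, avg w Q.1 ^ s * volume Q.1
      ≤ ∑' Q : {Q // Q ∈ S ∧ Q ⊆ R}, (A ^ s + ∑' j : ℕ,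
          if 2 ^ j * A < avg w Q.1 then (2 ^ (j + 1) * A) ^ s else 0) * volume Q.1 :=
        ENNReal.tsum_le_tsum fun Q => mul_le_mul_left (rpow_le_add_tsum_ite hA0 hA hs) _
    _ = A ^ s * ∑' Q : {Q // Q ∈ S ∧ Q ⊆ R}, volume Q.1 + ∑' j : ℕ, (2 ^ (j + 1) * A) ^ s *
          ∑' Q : {Q // Q ∈ S ∧ Q ⊆ R}, (if 2 ^ j * A < avg w Q.1 then volume Q.1 else 0) := by
        simp only [add_mul, ENNReal.tsum_add, ← ENNReal.tsum_mul_right, ← ENNReal.tsum_mul_left,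
          ite_mul, zero_mul, mul_ite, mul_zero]
        rw [ENNReal.tsum_comm]
    _ ≤ A ^ s * (η⁻¹ * volume R) + ∑' j : ℕ, (2 ^ (j + 1) * A) ^ s *
          ((2 ^ j * A)⁻¹ * A * (η⁻¹ * volume R)) :=
        add_le_add (mul_le_mul_right hvolume _)
          (ENNReal.tsum_le_tsum fun j => mul_le_mul_right (hlevel j) _)
    _ = η⁻¹ * (1 + 2 ^ s * (1 - 2 ^ (s - 1))⁻¹) * (A ^ s * volume R) := by
        rw [tsum_congr fun j => (mul_assoc _ _ _).symm, ENNReal.tsum_mul_right,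
          tsum_rpow_two_pow_mul_inv_mul hA0 hA hs]
        ring

theorem statement2 (eta : ℝ≥0∞) (heta0 : 0 < eta) (heta1 : eta ≤ 1) (s : ℝ)
    (hs0 : 0 < s) (hs1 : s < 1) (n : ℕ) :
    ∃ C : ℝ≥0∞, C < ∞ ∧ ∀ (w : (Fin n → ℝ) → ℝ≥0∞), Measurable w →
      ∀ (S : Set (Set (Fin n → ℝ))), IsSparse eta S →
      ∀ (R : Set (Fin n → ℝ)), IsDyadicCube R →
      ∑' Q : {Q : Set (Fin n → ℝ) // Q ∈ S ∧ Q ⊆ R},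
        (avg w Q.1) ^ s * volume Q.1 ≤ C * ((avg w R) ^ s * volume R) := by
  have heta : eta ≠ ∞ := ne_top_of_le_ne_top ENNReal.one_ne_top heta1
  have hr : (1 : ℝ≥0∞) - 2 ^ (s - 1) ≠ 0 :=
    (tsub_pos_of_lt (ENNReal.rpow_lt_one_of_one_lt_of_neg (by norm_num) (by linarith))).ne'
  refine ⟨eta⁻¹ * (1 + 2 ^ s * (1 - 2 ^ (s - 1))⁻¹), by finiteness, ?_⟩
  rintro w - S hS R ⟨k₀, m₀, rfl⟩
  obtain hA0 | hA0 := eq_or_ne (avg w (dyadicCube n k₀ m₀)) 0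
  · refine (ENNReal.tsum_eq_zero.2 fun Q => ?_).trans_le zero_le
    rw [avg_eq_zero_of_subset hA0 Q.2.2, ENNReal.zero_rpow_of_pos hs0, zero_mul]
  obtain hA | hA := eq_or_ne (avg w (dyadicCube n k₀ m₀)) ∞
  · rw [hA, ENNReal.top_rpow_of_pos hs0, ENNReal.top_mul (volume_dyadicCube_pos n k₀ m₀).ne',
      ENNReal.mul_top (by simp [heta])]
    exact le_top
  exact tsum_rpow_avg_mul_volume_le heta0.ne' heta hS w k₀ m₀ hA0 hA hs0.le
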